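/- Fix 0 ≤ r̲ ≤ r̄ ≤ C with C > 0, and constants k ≥ 0, m ≥ 0. Define g : [0,C] → ℝ by g(α) = k·α + m if α ∈ [r̲, r̄] and g(α) = 0 otherwise. Then the concavification ĝ of g satisfies: ĝ(α) = (k·r̲ + m)·(α/r̲) for α ∈ [0, r̲) when r̲ > 0; ĝ(α) = k·α + m for α ∈ [r̲, r̄]; and ĝ(α) = (k·r̄ + m)·(C − α)/(C − r̄) for α ∈ (r̄, C] when r̄ < C. -/

import Mathlib

/-!
On the contract range every concave majorant of `g` is at least `g α = k α + m`, and the line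
`k α + m` is itself a concave majorant of `g` on `[0, C]`. Left of `r̲`, a concave majorant lies
above its chord from `(0, u 0)` to `(r̲, u r̲)`, hence above the segment from `(0, 0)` to
`(r̲, k r̲ + m)`; the line through these two points is again a majorant of `g` on `[0, C]`, because
`m ≥ 0` makes it climb at least as fast as `k α + m` after `r̲`. Right of `r̄` the same argument
runs with the segment from `(r̄, k r̄ + m)` to `(C, 0)`, whose line has slope `≤ 0 ≤ k`.
-/

open Set

noncomputable def concavification {E : Type*} [AddCommMonoid E] [SMul ℝ E] (s : Set E)
    (g : E → ℝ) (x : E) : ℝ :=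
  sInf {y : ℝ | ∃ u : E → ℝ, ConcaveOn ℝ s u ∧ (∀ z ∈ s, g z ≤ u z) ∧ y = u x}

theorem concavification_eq {E : Type*} [AddCommMonoid E] [SMul ℝ E] {s : Set E} {g : E → ℝ}
    {x : E} {v : ℝ} (u₀ : E → ℝ) (hu₀ : ConcaveOn ℝ s u₀) (hgu₀ : ∀ z ∈ s, g z ≤ u₀ z)
    (hu₀x : u₀ x = v) (hle : ∀ u, ConcaveOn ℝ s u → (∀ z ∈ s, g z ≤ u z) → v ≤ u x) :
    concavification s g x = v :=
  IsLeast.csInf_eq ⟨⟨u₀, hu₀, hgu₀, hu₀x.symm⟩, by rintro _ ⟨u, hu, hgu, rfl⟩; exact hle u hu hgu⟩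

theorem concaveOn_mul_add {s : Set ℝ} (hs : Convex ℝ s) (c d : ℝ) :
    ConcaveOn ℝ s fun z => c * z + d :=
  ((LinearMap.mul ℝ ℝ c).concaveOn hs).add_const d

theorem ConcaveOn.chord_le {s : Set ℝ} {u : ℝ → ℝ} (hu : ConcaveOn ℝ s u) {a b x : ℝ}
    (ha : a ∈ s) (hb : b ∈ s) (hab : a < b) (hx : x ∈ Icc a b) :
    (b - x) / (b - a) * u a + (x - a) / (b - a) * u b ≤ u x := by
  have hba : 0 < b - a := sub_pos.2 hab
  have hpt : (b - x) / (b - a) * a + (x - a) / (b - a) * b = x := by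
    field_simp
    ring
  simpa only [smul_eq_mul, hpt] using
    hu.2 ha hb (div_nonneg (sub_nonneg.2 hx.2) hba.le) (div_nonneg (sub_nonneg.2 hx.1) hba.le)
      (by field_simp; ring)

noncomputable def truncatedLinear (a b k m z : ℝ) : ℝ :=
  if z ∈ Icc a b then k * z + m else 0

section TruncatedLinear

variable {a b k m C x : ℝ}

theorem truncatedLinear_of_mem {z : ℝ} (hz : z ∈ Icc a b) :
    truncatedLinear a b k m z = k * z + m :=
  if_pos hz

theorem truncatedLinear_of_notMem {z : ℝ} (hz : z ∉ Icc a b) : truncatedLinear a b k m z = 0 :=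
  if_neg hz

theorem truncatedLinear_le {z v : ℝ} (h₀ : 0 ≤ v) (h₁ : z ∈ Icc a b → k * z + m ≤ v) :
    truncatedLinear a b k m z ≤ v := by
  unfold truncatedLinear
  split_ifs with hz
  exacts [h₁ hz, h₀]

theorem concavification_truncatedLinear_of_mem_Icc (ha : 0 ≤ a) (hbC : b ≤ C) (hk : 0 ≤ k)
    (hm : 0 ≤ m) (hx : x ∈ Icc a b) :
    concavification (Icc 0 C) (truncatedLinear a b k m) x = k * x + m := by
  refine concavification_eq _ (concaveOn_mul_add (convex_Icc 0 C) k m)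
    (fun z hz => truncatedLinear_le (by nlinarith [hz.1]) fun _ => le_rfl) rfl
    fun u _ hgu => ?_
  simpa only [truncatedLinear_of_mem hx] using hgu x ⟨ha.trans hx.1, hx.2.trans hbC⟩

theorem concavification_truncatedLinear_of_mem_Ico (ha : 0 < a) (hab : a ≤ b) (hbC : b ≤ C)
    (hk : 0 ≤ k) (hm : 0 ≤ m) (hx : x ∈ Ico 0 a) :
    concavification (Icc 0 C) (truncatedLinear a b k m) x = (k * a + m) * (x / a) := by
  have haC : a ∈ Icc 0 C := ⟨ha.le, hab.trans hbC⟩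
  have h0C : (0 : ℝ) ∈ Icc 0 C := ⟨le_rfl, haC.1.trans haC.2⟩
  refine concavification_eq (fun z => (k * a + m) * (z / a))
    ((concaveOn_mul_add (convex_Icc 0 C) ((k * a + m) / a) 0).congr fun z _ => by ring)
    (fun z hz => truncatedLinear_le ?_ fun hz' => ?_) rfl fun u hu hgu => ?_
  · have := hz.1
    positivity
  · rw [mul_div_assoc', le_div_iff₀ ha]
    nlinarith [hz'.1]
  · have hu₀ : 0 ≤ u 0 := by
      simpa only [truncatedLinear_of_notMem fun h : (0 : ℝ) ∈ Icc a b => ha.not_ge h.1]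
        using hgu 0 h0C
    have hua : k * a + m ≤ u a := by
      simpa only [truncatedLinear_of_mem ⟨le_rfl, hab⟩] using hgu a haC
    have hchord := hu.chord_le h0C haC ha ⟨hx.1, hx.2.le⟩
    simp only [sub_zero] at hchord
    have hw₀ : 0 ≤ (a - x) / a := div_nonneg (sub_nonneg.2 hx.2.le) ha.le
    have hw₁ : 0 ≤ x / a := div_nonneg hx.1 ha.le
    nlinarith [mul_nonneg hw₀ hu₀, mul_le_mul_of_nonneg_left hua hw₁]

theorem concavification_truncatedLinear_of_mem_Ioc (ha : 0 ≤ a) (hab : a ≤ b) (hbC : b < C)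
    (hk : 0 ≤ k) (hm : 0 ≤ m) (hx : x ∈ Ioc b C) :
    concavification (Icc 0 C) (truncatedLinear a b k m) x =
      (k * b + m) * ((C - x) / (C - b)) := by
  have hCb : 0 < C - b := sub_pos.2 hbC
  have hbI : b ∈ Icc 0 C := ⟨ha.trans hab, hbC.le⟩
  have hCI : C ∈ Icc 0 C := ⟨hbI.1.trans hbC.le, le_rfl⟩
  refine concavification_eq (fun z => (k * b + m) * ((C - z) / (C - b)))
    ((concaveOn_mul_add (convex_Icc 0 C) (-((k * b + m) / (C - b)))
      ((k * b + m) * C / (C - b))).congr fun z _ => by ring)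
    (fun z hz => truncatedLinear_le ?_ fun hz' => ?_) rfl fun u hu hgu => ?_
  · have := sub_nonneg.2 hz.2
    have := hbI.1
    positivity
  · rw [mul_div_assoc', le_div_iff₀ hCb]
    nlinarith [mul_nonneg (sub_nonneg.2 hz'.2) (add_nonneg (mul_nonneg hk hCI.1) hm)]
  · have huC : 0 ≤ u C := by
      simpa only [truncatedLinear_of_notMem fun h : C ∈ Icc a b => hbC.not_ge h.2]
        using hgu C hCI
    have hub : k * b + m ≤ u b := by
      simpa only [truncatedLinear_of_mem ⟨hab, le_rfl⟩] using hgu b hbI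
    have hchord := hu.chord_le hbI hCI hbC ⟨hx.1.le, hx.2⟩
    have hw₀ : 0 ≤ (C - x) / (C - b) := div_nonneg (sub_nonneg.2 hx.2) hCb.le
    have hw₁ : 0 ≤ (x - b) / (C - b) := div_nonneg (sub_nonneg.2 hx.1.le) hCb.le
    nlinarith [mul_nonneg hw₁ huC, mul_le_mul_of_nonneg_left hub hw₀]

end TruncatedLinear

theorem stmt_7_general (C : ℝ) (rlo rhi k m : ℝ)
    (hrlo : 0 ≤ rlo) (hr : rlo ≤ rhi) (hrhi : rhi ≤ C)
    (hk : 0 ≤ k) (hm : 0 ≤ m)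
    (g ghat : ℝ → ℝ)
    (hg : ∀ α, g α = if α ∈ Set.Icc rlo rhi then k * α + m else 0)
    (hghat : ∀ x ∈ Set.Icc 0 C,
      ghat x = sInf {y : ℝ | ∃ u : ℝ → ℝ, ConcaveOn ℝ (Set.Icc 0 C) u ∧
        (∀ z ∈ Set.Icc 0 C, g z ≤ u z) ∧ y = u x}) :
    (0 < rlo → ∀ α ∈ Set.Ico (0:ℝ) rlo, ghat α = (k * rlo + m) * (α / rlo)) ∧
    (∀ α ∈ Set.Icc rlo rhi, ghat α = k * α + m) ∧
    (rhi < C → ∀ α ∈ Set.Ioc rhi C, ghat α = (k * rhi + m) * ((C - α) / (C - rhi))) := by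
  obtain rfl : g = truncatedLinear rlo rhi k m := funext hg
  refine ⟨fun hlo α hα => ?_, fun α hα => ?_, fun hhi α hα => ?_⟩
  · rw [hghat α ⟨hα.1, hα.2.le.trans (hr.trans hrhi)⟩]
    exact concavification_truncatedLinear_of_mem_Ico hlo hr hrhi hk hm hα
  · rw [hghat α ⟨hrlo.trans hα.1, hα.2.trans hrhi⟩]
    exact concavification_truncatedLinear_of_mem_Icc hrlo hrhi hk hm hα
  · rw [hghat α ⟨(hrlo.trans hr).trans hα.1.le, hα.2⟩]
    exact concavification_truncatedLinear_of_mem_Ioc hrlo hr hhi hk hm hα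

/-- Explicit three-piece form of the concavification of a truncated-range linear contract
`g(α) = k·α + m` on `[r̲, r̄]`, `g = 0` elsewhere, over `[0,C]`. -/
theorem stmt_7 (C : ℝ) (hC : 0 < C) (rlo rhi k m : ℝ)
    (hrlo : 0 ≤ rlo) (hr : rlo ≤ rhi) (hrhi : rhi ≤ C)
    (hk : 0 ≤ k) (hm : 0 ≤ m)
    (g ghat : ℝ → ℝ)
    (hg : ∀ α, g α = if α ∈ Set.Icc rlo rhi then k * α + m else 0)
    (hghat : ∀ x ∈ Set.Icc 0 C,
      ghat x = sInf {y : ℝ | ∃ u : ℝ → ℝ, ConcaveOn ℝ (Set.Icc 0 C) u ∧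
        (∀ z ∈ Set.Icc 0 C, g z ≤ u z) ∧ y = u x}) :
    (0 < rlo → ∀ α ∈ Set.Ico (0:ℝ) rlo, ghat α = (k * rlo + m) * (α / rlo)) ∧
    (∀ α ∈ Set.Icc rlo rhi, ghat α = k * α + m) ∧
    (rhi < C → ∀ α ∈ Set.Ioc rhi C, ghat α = (k * rhi + m) * ((C - α) / (C - rhi))) :=
  stmt_7_general C rlo rhi k m hrlo hr hrhi hk hm g ghat hg hghat
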